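/- Let μ be a finite positive Borel measure on ℝ whose support is a compact set containing infinitely many points, let 2 ≤ p < ∞, let n ∈ ℕ, and let x₀, …, x_n be distinct real numbers. For 𝐱 = (x₀,…,x_n) set P_{n+1}(x) := (x − x₀)⋯(x − x_n) and f_k(𝐱) := ∫ |P_{n+1}(x)|^p/(x − x_k) dμ(x) (interpreted as in the standard way with the polynomial quotient). Then for j ≠ k, f_k is partially differentiable with respect to x_j with ∂f_k/∂x_j (𝐱) = p ∫ (1/(x − x_k)) · (∂P_{n+1}/∂x_j)(x) · |P_{n+1}(x)|^{p−1} · sgn(P_{n+1}(x)) dμ(x), where ∂P_{n+1}/∂x_j (x) = −∏_{i≠j}(x − x_i). -/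

import Mathlib

open MeasureTheory Polynomial Finset

/-!
With `v = update x j s`, the integrand of `f v` factors as `|t - s| ^ p * g t`, where
`g t = |t - x k| ^ (p - 1) sgn (t - x k) * |∏_{i ≠ j, k} (t - x i)| ^ p` does not depend on `s`.
For `p ≥ 2` the `s`-derivative `-p |t - s| ^ (p - 1) sgn (t - s) * g t` is jointly continuous, and
`μ` lives on a compact set, so differentiation under the integral sign applies. Multiplicativity
of `y ↦ |y| ^ (p - 1) sgn y` turns the resulting integrand into the claimed one.
-/

def measureSupport (μ : Measure ℝ) : Set ℝ :=
  {x : ℝ | ∀ U : Set ℝ, IsOpen U → x ∈ U → μ U ≠ 0}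

theorem measureSupport_eq_support (μ : Measure ℝ) : measureSupport μ = μ.support := by
  ext x
  simp only [measureSupport, Measure.support_eq_forall_isOpen, Set.mem_ofPred_eq, pos_iff_ne_zero]
  exact forall_congr' fun U => ⟨fun h hx hU => h hU hx, fun h hU hx => h hx hU⟩

theorem ae_mem_measureSupport (μ : Measure ℝ) : ∀ᵐ t ∂μ, t ∈ measureSupport μ :=
  measureSupport_eq_support μ ▸ Measure.support_mem_ae

theorem Real.sign_eq_coe_sign (r : ℝ) : Real.sign r = (SignType.sign r : ℝ) := by
  rcases lt_trichotomy r 0 with h | rfl | h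
  · simp [Real.sign_of_neg h, _root_.sign_neg h]
  · simp
  · simp [Real.sign_of_pos h, sign_pos h]

theorem Real.sign_mul (a b : ℝ) : Real.sign (a * b) = Real.sign a * Real.sign b := by
  simp only [Real.sign_eq_coe_sign, _root_.sign_mul, SignType.coe_mul]

theorem Real.sign_mul_abs (r : ℝ) : Real.sign r * |r| = r := by
  rw [Real.sign_eq_coe_sign, _root_.sign_mul_abs]

theorem Real.self_mul_sign (r : ℝ) : r * Real.sign r = |r| := by
  rw [Real.sign_eq_coe_sign, _root_.self_mul_sign]

noncomputable def signedRpow (q y : ℝ) : ℝ := |y| ^ q * Real.sign y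

theorem signedRpow_mul (q a b : ℝ) : signedRpow q (a * b) = signedRpow q a * signedRpow q b := by
  simp only [signedRpow, abs_mul, Real.mul_rpow (abs_nonneg a) (abs_nonneg b), Real.sign_mul]
  ring

theorem self_mul_signedRpow_sub_one {p : ℝ} (hp : p ≠ 0) (y : ℝ) :
    y * signedRpow (p - 1) y = |y| ^ p := by
  rcases eq_or_ne y 0 with rfl | hy
  · simp [Real.zero_rpow hp]
  · rw [signedRpow, mul_left_comm, Real.self_mul_sign,
      ← Real.rpow_add_one (abs_ne_zero.2 hy), sub_add_cancel]

theorem signedRpow_add_one (q y : ℝ) : signedRpow (q + 1) y = |y| ^ q * y := by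
  rcases eq_or_ne y 0 with rfl | hy
  · simp [signedRpow]
  · rw [signedRpow, Real.rpow_add_one (abs_ne_zero.2 hy), mul_assoc, mul_comm |y|,
      Real.sign_mul_abs]

theorem continuous_signedRpow {q : ℝ} (hq : 1 ≤ q) : Continuous (signedRpow q) := by
  have h : signedRpow q = fun y => |y| ^ (q - 1) * y := by
    ext y; rw [← signedRpow_add_one, sub_add_cancel]
  rw [h]
  exact ((Real.continuous_rpow_const (by linarith)).comp continuous_abs).mul continuous_id

theorem hasDerivAt_abs_rpow_signedRpow {p : ℝ} (hp : 1 < p) (y : ℝ) :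
    HasDerivAt (fun y => |y| ^ p) (p * signedRpow (p - 1) y) y := by
  convert hasDerivAt_abs_rpow y hp using 1
  rw [show p - 1 = p - 2 + 1 by ring, signedRpow_add_one, mul_assoc]

theorem hasDerivAt_integral_of_continuous_of_ae_mem_compact {α : Type*} [TopologicalSpace α]
    [MeasurableSpace α] [OpensMeasurableSpace α] {μ : Measure α} [IsFiniteMeasure μ]
    {K : Set α} (hK : IsCompact K) (hμK : ∀ᵐ t ∂μ, t ∈ K) {F F' : ℝ → α → ℝ}
    (hF : ∀ s, Continuous (F s)) (hF' : Continuous (Function.uncurry F'))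
    (hderiv : ∀ s t, HasDerivAt (F · t) (F' s t) s) (s₀ : ℝ) :
    HasDerivAt (fun s => ∫ t, F s t ∂μ) (∫ t, F' s₀ t ∂μ) s₀ := by
  obtain ⟨M, hM⟩ := ((isCompact_closedBall s₀ 1).prod hK).exists_bound_of_continuousOn
    hF'.continuousOn
  obtain ⟨C, hC⟩ := hK.exists_bound_of_continuousOn (hF s₀).continuousOn
  have hint : Integrable (F s₀) μ :=
    .of_bound (hF s₀).aestronglyMeasurable C (hμK.mono fun t ht => hC t ht)
  refine (hasDerivAt_integral_of_dominated_loc_of_deriv_le (bound := fun _ => M)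
    (Metric.closedBall_mem_nhds s₀ one_pos) (.of_forall fun s => (hF s).aestronglyMeasurable) hint
    (hF'.uncurry_left s₀).aestronglyMeasurable ?_ (integrable_const M)
    (.of_forall fun t s _ => hderiv s t)).2
  filter_upwards [hμK] with t ht s hs
  exact hM (s, t) ⟨hs, ht⟩

theorem hasDerivAt_integral_abs_sub_rpow_mul {μ : Measure ℝ} [IsFiniteMeasure μ] {K : Set ℝ}
    (hK : IsCompact K) (hμK : ∀ᵐ t ∂μ, t ∈ K) {p : ℝ} (hp : 2 ≤ p) {g : ℝ → ℝ}
    (hg : Continuous g) (s₀ : ℝ) :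
    HasDerivAt (fun s => ∫ t, |t - s| ^ p * g t ∂μ)
      (∫ t, -(p * signedRpow (p - 1) (t - s₀)) * g t ∂μ) s₀ := by
  have := continuous_signedRpow (q := p - 1) (by linarith)
  refine hasDerivAt_integral_of_continuous_of_ae_mem_compact (F := fun s t => |t - s| ^ p * g t)
    (F' := fun s t => -(p * signedRpow (p - 1) (t - s)) * g t) hK hμK
    (fun s => by fun_prop (disch := linarith)) (by fun_prop) (fun s t => ?_) s₀
  have := ((hasDerivAt_abs_rpow_signedRpow (by linarith) (t - s)).comp s
    ((hasDerivAt_id s).const_sub t)).mul_const (g t)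
  exact this.congr_deriv (by ring)

theorem prod_erase_update_eq {ι : Type*} [Fintype ι] [DecidableEq ι] (x : ι → ℝ) {j k : ι}
    (hjk : j ≠ k) (s t : ℝ) :
    ∏ i ∈ univ.erase k, (t - Function.update x j s i) =
      (t - s) * ∏ i ∈ (univ.erase j).erase k, (t - x i) := by
  rw [← mul_prod_erase _ _ (mem_erase.2 ⟨hjk, mem_univ j⟩), Function.update_self]
  refine congrArg _ (prod_congr erase_right_comm fun i hi => ?_)
  rw [Function.update_of_ne (mem_erase.1 (mem_of_mem_erase hi)).1]

theorem prod_univ_eq_mul_mul_prod_erase_erase {ι M : Type*} [Fintype ι] [DecidableEq ι]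
    [CommMonoid M] (f : ι → M) {j k : ι} (hjk : j ≠ k) :
    ∏ i, f i = f j * (f k * ∏ i ∈ (univ.erase j).erase k, f i) := by
  rw [← mul_prod_erase univ f (mem_univ j),
    ← mul_prod_erase _ f (mem_erase.2 ⟨hjk.symm, mem_univ k⟩)]

theorem mul_abs_rpow_mul_sign_mul_abs_rpow_mul_sign {p : ℝ} (hp : p ≠ 0) (a b : ℝ) :
    a * |b| ^ (p - 1) * Real.sign b * |a| ^ (p - 1) * Real.sign a =
      |a| ^ p * signedRpow (p - 1) b := by
  rw [← self_mul_signedRpow_sub_one hp a, signedRpow, signedRpow]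
  ring

theorem neg_signedRpow_mul_signedRpow_mul_abs_rpow {p : ℝ} (hp : p ≠ 0) (a b c : ℝ) :
    -(p * signedRpow (p - 1) a) * (signedRpow (p - 1) b * |c| ^ p) =
      p * (-c * |a * (b * c)| ^ (p - 1) * Real.sign (a * (b * c))) := by
  rw [mul_assoc (-c), ← signedRpow, signedRpow_mul, signedRpow_mul,
    ← self_mul_signedRpow_sub_one hp c]
  ring

theorem partial_deriv_fk_xj_general
    (μ : Measure ℝ) [IsFiniteMeasure μ]
    (hcomp : IsCompact (measureSupport μ))
    (p : ℝ) (hp2 : 2 ≤ p) (n : ℕ)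
    (x : Fin (n + 1) → ℝ)
    (k j : Fin (n + 1)) (hjk : j ≠ k)
    (f : (Fin (n + 1) → ℝ) → ℝ)
    (hf : f = fun v : Fin (n + 1) → ℝ => ∫ t : ℝ,
      (∏ i ∈ Finset.univ.erase k, (t - v i)) * |t - v k| ^ (p - 1) * Real.sign (t - v k)
        * |∏ i ∈ Finset.univ.erase k, (t - v i)| ^ (p - 1)
        * Real.sign (∏ i ∈ Finset.univ.erase k, (t - v i)) ∂μ) :
    HasDerivAt (fun s : ℝ => f (Function.update x j s))
      (p * ∫ t : ℝ,
        (-(∏ i ∈ (Finset.univ.erase j).erase k, (t - x i)))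
          * |∏ i, (t - x i)| ^ (p - 1) * Real.sign (∏ i, (t - x i)) ∂μ) (x j) := by
  have hp : p ≠ 0 := by positivity
  set Q : ℝ → ℝ := fun t => ∏ i ∈ (univ.erase j).erase k, (t - x i)
  set g : ℝ → ℝ := fun t => signedRpow (p - 1) (t - x k) * |Q t| ^ p
  have hfg : (fun s => f (Function.update x j s)) = fun s => ∫ t, |t - s| ^ p * g t ∂μ := by
    ext s
    refine hf ▸ integral_congr_ae (.of_forall fun t => ?_)
    beta_reduce
    rw [prod_erase_update_eq x hjk, Function.update_of_ne hjk.symm,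
      mul_abs_rpow_mul_sign_mul_abs_rpow_mul_sign hp, abs_mul,
      Real.mul_rpow (abs_nonneg _) (abs_nonneg _)]
    simp only [g]
    ring
  have hg : Continuous g := by
    have := continuous_signedRpow (q := p - 1) (by linarith)
    simp only [g, Q]
    fun_prop (disch := linarith)
  rw [hfg, ← integral_const_mul]
  refine (hasDerivAt_integral_abs_sub_rpow_mul hcomp (ae_mem_measureSupport μ) hp2 hg
    (x j)).congr_deriv (integral_congr_ae (.of_forall fun t => ?_))
  beta_reduce
  rw [prod_univ_eq_mul_mul_prod_erase_erase _ hjk]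
  exact neg_signedRpow_mul_signedRpow_mul_abs_rpow hp _ _ _

/-- With `P_{n+1}(x) = ∏_j (x - x_j)` and
`f_k(𝐱) = ∫ |P_{n+1}(x)|^p / (x - x_k) dμ(x)` (the integrand interpreted as the
everywhere-defined product
`(∏_{i≠k}(x - x_i)) · |x - x_k|^{p-1} sgn(x - x_k) · |∏_{i≠k}(x - x_i)|^{p-1} sgn(∏_{i≠k}(x - x_i))`),
the function `f_k` is, for `j ≠ k`, partially differentiable with respect to `x_j` with
`∂f_k/∂x_j = p ∫ (1/(x - x_k)) · (∂P_{n+1}/∂x_j)(x) · |P_{n+1}(x)|^{p-1} · sgn(P_{n+1}(x)) dμ(x)`,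
where `∂P_{n+1}/∂x_j (x) = -∏_{i≠j}(x - x_i)`; the factor `(x - x_k)` of
`∂P_{n+1}/∂x_j` cancels `1/(x - x_k)`, so the integrand is the everywhere-defined product
`-(∏_{i≠j,i≠k}(x - x_i)) · |P_{n+1}(x)|^{p-1} · sgn(P_{n+1}(x))`. -/
theorem partial_deriv_fk_xj
    (μ : Measure ℝ) [IsFiniteMeasure μ]
    (hcomp : IsCompact (measureSupport μ))
    (hinf : (measureSupport μ).Infinite)
    (p : ℝ) (hp2 : 2 ≤ p) (n : ℕ)
    (x : Fin (n + 1) → ℝ) (hx : Function.Injective x)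
    (k j : Fin (n + 1)) (hjk : j ≠ k)
    (f : (Fin (n + 1) → ℝ) → ℝ)
    (hf : f = fun v : Fin (n + 1) → ℝ => ∫ t : ℝ,
      (∏ i ∈ Finset.univ.erase k, (t - v i)) * |t - v k| ^ (p - 1) * Real.sign (t - v k)
        * |∏ i ∈ Finset.univ.erase k, (t - v i)| ^ (p - 1)
        * Real.sign (∏ i ∈ Finset.univ.erase k, (t - v i)) ∂μ) :
    HasDerivAt (fun s : ℝ => f (Function.update x j s))
      (p * ∫ t : ℝ,
        (-(∏ i ∈ (Finset.univ.erase j).erase k, (t - x i)))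
          * |∏ i, (t - x i)| ^ (p - 1) * Real.sign (∏ i, (t - x i)) ∂μ) (x j) :=
  partial_deriv_fk_xj_general μ hcomp p hp2 n x k j hjk f hf
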